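/- The quadratic Wasserstein distance is not invariant under mass addition: there exist nonnegative integrable functions f, g of equal mass and a function h̄ with f + h̄ ≥ 0, g + h̄ ≥ 0, such that W₂(f + h̄, g + h̄) ≠ W₂(f, g). -/

import Mathlib

open MeasureTheory
open scoped ENNReal

noncomputable def W2sq {E : Type*} [MeasurableSpace E] [NormedAddCommGroup E]
    (μ ν : Measure E) : ℝ≥0∞ :=
  ⨅ π ∈ {π : Measure (E × E) | π.map Prod.fst = μ ∧ π.map Prod.snd = ν},
    ∫⁻ p, (‖p.1 - p.2‖₊ : ℝ≥0∞) ^ 2 ∂π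

/-!
Take `f = 𝟙[0,1)`, `g = 𝟙[4,5)` and `h̄ = 𝟙[1,4)`. Then `f + h̄ = 𝟙[0,4)` is carried onto
`g + h̄ = 𝟙[1,5)` by the translation `x ↦ x + 1`, which costs `1² · 4 = 4`; but every coupling
of `f` and `g` moves its unit mass a distance at least `3`, so `W₂(f, g)² ≥ 9`.
-/

open Set
open scoped NNReal

section W2sq

variable {E : Type*} [MeasurableSpace E] [NormedAddCommGroup E]

lemma W2sq_map_le (μ : Measure E) {T : E → E} (hT : Measurable T) :
    W2sq μ (μ.map T) ≤ ∫⁻ x, (‖x - T x‖₊ : ℝ≥0∞) ^ 2 ∂μ := by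
  have hgraph : Measurable fun x => (x, T x) := measurable_id.prodMk hT
  refine (iInf₂_le (μ.map fun x => (x, T x)) ⟨?_, ?_⟩).trans (lintegral_map_le _ _)
  · rw [Measure.map_map measurable_fst hgraph]
    exact Measure.map_id
  · rw [Measure.map_map measurable_snd hgraph]
    rfl

lemma W2sq_map_add_const_le [MeasurableAdd E] (μ : Measure E) (c : E) :
    W2sq μ (μ.map (· + c)) ≤ (‖c‖₊ : ℝ≥0∞) ^ 2 * μ univ := by
  refine (W2sq_map_le μ (measurable_add_const c)).trans_eq ?_
  simp only [sub_add_cancel_left, nnnorm_neg, lintegral_const]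

lemma le_W2sq_of_ae_mem {μ ν : Measure E} {A B : Set E} (hA : ∀ᵐ x ∂μ, x ∈ A)
    (hB : ∀ᵐ y ∂ν, y ∈ B) {d : ℝ≥0} (hd : ∀ a ∈ A, ∀ b ∈ B, d ≤ ‖a - b‖₊) :
    (d : ℝ≥0∞) ^ 2 * μ univ ≤ W2sq μ ν := by
  refine le_iInf₂ fun π ⟨hfst, hsnd⟩ => ?_
  have hA' : ∀ᵐ p ∂π, p.1 ∈ A :=
    ae_of_ae_map measurable_fst.aemeasurable (p := (· ∈ A)) (hfst ▸ hA)
  have hB' : ∀ᵐ p ∂π, p.2 ∈ B :=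
    ae_of_ae_map measurable_snd.aemeasurable (p := (· ∈ B)) (hsnd ▸ hB)
  have hmass : π univ = μ univ := by
    rw [← hfst, Measure.map_apply measurable_fst MeasurableSet.univ, preimage_univ]
  calc (d : ℝ≥0∞) ^ 2 * μ univ = ∫⁻ _, d ^ 2 ∂π := by rw [lintegral_const, hmass]
    _ ≤ ∫⁻ p, (‖p.1 - p.2‖₊ : ℝ≥0∞) ^ 2 ∂π := by
      refine lintegral_mono_ae ?_
      filter_upwards [hA', hB'] with p ha hb
      exact pow_le_pow_left₀ zero_le (ENNReal.coe_le_coe.2 (hd _ ha _ hb)) 2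

end W2sq

lemma withDensity_ofReal_indicator_one {α : Type*} [MeasurableSpace α] (μ : Measure α)
    {s : Set α} (hs : MeasurableSet s) :
    (μ.withDensity fun x => ENNReal.ofReal (s.indicator 1 x)) = μ.restrict s := by
  have h : (fun x => ENNReal.ofReal (s.indicator 1 x)) = s.indicator 1 := by
    funext x
    by_cases hx : x ∈ s <;> simp [hx]
  rw [h, withDensity_indicator_one hs]

lemma map_add_const_volume_restrict_Ico (a b c : ℝ) :
    (volume.restrict (Ico a b)).map (· + c) = volume.restrict (Ico (a + c) (b + c)) := by
  have hpre : Ico a b = (· + c) ⁻¹' Ico (a + c) (b + c) := by simp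
  rw [hpre, ← Measure.restrict_map (measurable_add_const c) measurableSet_Ico,
    map_add_right_eq_self]

lemma integrable_indicator_one_Ico (a b : ℝ) : Integrable ((Ico a b).indicator (1 : ℝ → ℝ)) :=
  (integrable_indicator_iff measurableSet_Ico).2 (integrableOn_const measure_Ico_lt_top.ne)

lemma indicator_one_Ico_add_indicator_one_Ico {a b c : ℝ} (hab : a ≤ b) (hbc : b ≤ c) (x : ℝ) :
    (Ico a b).indicator 1 x + (Ico b c).indicator 1 x = (Ico a c).indicator (1 : ℝ → ℝ) x := by
  rw [← Ico_union_Ico_eq_Ico hab hbc, indicator_union_of_disjoint Ico_disjoint_Ico_same]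

lemma W2sq_restrict_Ico_restrict_Ico_add_le (a b c : ℝ) :
    W2sq (volume.restrict (Ico a b)) (volume.restrict (Ico (a + c) (b + c))) ≤
      (‖c‖₊ : ℝ≥0∞) ^ 2 * ENNReal.ofReal (b - a) := by
  simpa [← map_add_const_volume_restrict_Ico] using
    W2sq_map_add_const_le (volume.restrict (Ico a b)) c

lemma le_W2sq_restrict_Ico_restrict_Ico {a b c d : ℝ} (hbc : b ≤ c) :
    ENNReal.ofReal (c - b) ^ 2 * ENNReal.ofReal (b - a) ≤
      W2sq (volume.restrict (Ico a b)) (volume.restrict (Ico c d)) := by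
  have h := le_W2sq_of_ae_mem (μ := volume.restrict (Ico a b)) (ν := volume.restrict (Ico c d))
    (ae_restrict_mem measurableSet_Ico) (ae_restrict_mem measurableSet_Ico)
    (d := (c - b).toNNReal) fun x hx y hy => ?_
  · simpa [ENNReal.ofReal] using h
  rw [← NNReal.coe_le_coe, coe_nnnorm, Real.coe_toNNReal _ (sub_nonneg.2 hbc), Real.norm_eq_abs,
    abs_sub_comm, abs_of_nonneg] <;> linarith [hx.2, hy.1]

/-- `W₂` is not invariant under mass addition: there are nonnegative
integrable `f, g` of equal mass and an `h̄` with `f + h̄ ≥ 0`, `g + h̄ ≥ 0`, such that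
`W₂(f + h̄, g + h̄) ≠ W₂(f, g)`. -/
theorem W2_not_invariant_under_mass_addition :
    ∃ f g hbar : ℝ → ℝ,
      Integrable f ∧ Integrable g ∧ Integrable hbar ∧
      (∀ x, 0 ≤ f x) ∧ (∀ x, 0 ≤ g x) ∧
      (∫ x, f x) = (∫ x, g x) ∧
      (∀ x, 0 ≤ f x + hbar x) ∧ (∀ x, 0 ≤ g x + hbar x) ∧
      W2sq (volume.withDensity fun x => ENNReal.ofReal (f x + hbar x))
          (volume.withDensity fun x => ENNReal.ofReal (g x + hbar x)) ≠
        W2sq (volume.withDensity fun x => ENNReal.ofReal (f x))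
          (volume.withDensity fun x => ENNReal.ofReal (g x)) := by
  have hnn (s : Set ℝ) (x : ℝ) : (0 : ℝ) ≤ s.indicator 1 x := indicator_nonneg (by simp) x
  refine ⟨(Ico 0 1).indicator 1, (Ico 4 5).indicator 1, (Ico 1 4).indicator 1,
    integrable_indicator_one_Ico 0 1, integrable_indicator_one_Ico 4 5,
    integrable_indicator_one_Ico 1 4, hnn _, hnn _, ?_,
    fun x => add_nonneg (hnn _ x) (hnn _ x), fun x => add_nonneg (hnn _ x) (hnn _ x), ?_⟩
  · simp only [integral_indicator_one measurableSet_Ico, Real.volume_real_Ico]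
    norm_num
  have hf (x : ℝ) := indicator_one_Ico_add_indicator_one_Ico (a := 0) (b := 1) (c := 4)
    (by norm_num) (by norm_num) x
  have hg (x : ℝ) := (add_comm _ _).trans <|
    indicator_one_Ico_add_indicator_one_Ico (a := 1) (b := 4) (c := 5) (by norm_num) (by norm_num) x
  simp only [hf, hg, withDensity_ofReal_indicator_one volume measurableSet_Ico]
  have hshift : W2sq (volume.restrict (Ico (0 : ℝ) 4)) (volume.restrict (Ico 1 5)) ≤ 4 := by
    simpa [show (4 : ℝ) + 1 = 5 by norm_num] using W2sq_restrict_Ico_restrict_Ico_add_le 0 4 (1 : ℝ)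
  have hfar : 3 ^ 2 ≤ W2sq (volume.restrict (Ico (0 : ℝ) 1)) (volume.restrict (Ico 4 5)) := by
    simpa [show (4 : ℝ) - 1 = 3 by norm_num, ENNReal.ofReal_ofNat] using
      le_W2sq_restrict_Ico_restrict_Ico (a := 0) (b := 1) (c := 4) (d := 5) (by norm_num)
  intro heq
  have hcontra : (3 : ℝ≥0∞) ^ 2 ≤ 4 := (hfar.trans heq.ge).trans hshift
  norm_num at hcontra
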